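/- arXiv:2109.15137 — 2 statements merged into one kernel-verified Lean document; each statement's English description precedes it below -/
import Mathlib

section
/- For any constant λ ∈ A_n and any vector-valued Clifford number u = u_0 + Σ_{j=1}^n u_j e_j, the norm satisfies |λu|^2 = |λ|^2 |u|^2, where |x|^2 = Σ_A x_A^2 is the squared coefficient norm on A_n. -/
open MeasureTheory Finset Real

noncomputable section

/-- The real Clifford algebra `A_n`, modeled by coefficients over ordered multi-indices. -/
abbrev Cl (n : ℕ) := Finset (Fin n) → ℝ

/-- The standard basis element `e_A`. -/
def basisE {n : ℕ} (A : Finset (Fin n)) : Cl n := fun B => if B = A then 1 else 0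

/-- The unit element `e_∅ = 1`. -/
def cone (n : ℕ) : Cl n := basisE ∅

/-- The sign appearing in the product `e_A * e_B = csign A B • e_{A Δ B}`,
counting anticommutations and squares `e_j^2 = -1`. -/
def csign {n : ℕ} (A B : Finset (Fin n)) : ℝ :=
  (-1 : ℝ) ^ ((((A ×ˢ B).filter (fun p => p.2 < p.1)).card) + (A ∩ B).card)

/-- Clifford multiplication. -/
def cmul {n : ℕ} (x y : Cl n) : Cl n :=
  fun C => ∑ A : Finset (Fin n), ∑ B : Finset (Fin n),
    if symmDiff A B = C then csign A B * x A * y B else 0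

/-- Clifford conjugation: `conj (e_A) = (-1)^{|A|(|A|+1)/2} e_A`. -/
def cconj {n : ℕ} (x : Cl n) : Cl n :=
  fun A => (-1 : ℝ) ^ (A.card * (A.card + 1) / 2) * x A

/-- Squared coefficient norm `|x|^2 = Σ_A x_A^2`. -/
def cnormSq {n : ℕ} (x : Cl n) : ℝ := ∑ A : Finset (Fin n), (x A) ^ 2

/-- Coefficient norm. -/
def cnorm {n : ℕ} (x : Cl n) : ℝ := Real.sqrt (cnormSq x)

/-- Embedding of real scalars. -/
def scal {n : ℕ} (r : ℝ) : Cl n := fun A => if A = ∅ then r else 0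

/-- A Clifford number is vector-valued if it has components only in degrees 0 and 1. -/
def IsVector {n : ℕ} (u : Cl n) : Prop := ∀ A : Finset (Fin n), 2 ≤ A.card → u A = 0

/-- `ℝ^{n+1}` with the Euclidean structure. -/
abbrev Rn1 (n : ℕ) := EuclideanSpace ℝ (Fin (n + 1))

/-- Partial derivative `∂_j`. -/
def pder {n : ℕ} (j : Fin (n + 1)) (f : Rn1 n → ℝ) (x : Rn1 n) : ℝ :=
  fderiv ℝ f x (EuclideanSpace.single j 1)

/-- The generators `e_0 = 1, e_1, ..., e_n`. -/
def egen {n : ℕ} (j : Fin (n + 1)) : Cl n :=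
  if h : j = 0 then cone n else basisE {j.pred h}

/-- The Dirac operator `D u = Σ_j e_j ∂_j u`. -/
def Dirac {n : ℕ} (u : Rn1 n → Cl n) (x : Rn1 n) : Cl n :=
  ∑ j : Fin (n + 1), cmul (egen j) (fun A => pder j (fun y => u y A) x)

/-- The conjugate Dirac operator `conj(D) u = ∂_0 u - Σ_{j≥1} e_j ∂_j u`. -/
def DiracConj {n : ℕ} (u : Rn1 n → Cl n) (x : Rn1 n) : Cl n :=
  ∑ j : Fin (n + 1), cmul (cconj (egen j)) (fun A => pder j (fun y => u y A) x)

/-- The Laplacian `Δ = Σ_j ∂_j^2`. -/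
def lap {n : ℕ} (f : Rn1 n → ℝ) (x : Rn1 n) : ℝ :=
  ∑ j : Fin (n + 1), pder j (pder j f) x

/-- The weighted adjoint `D*_φ β = 2 β conj(D) φ - conj(D) β` acting on a real scalar
function `β`. -/
def Dstar {n : ℕ} (φ β : Rn1 n → ℝ) (x : Rn1 n) : Cl n :=
  (2 * β x) • DiracConj (fun y => scal (φ y)) x - DiracConj (fun y => scal (β y)) x

/-- Left-monogenic (smooth and `Du = 0`). -/
def Monogenic {n : ℕ} (u : Rn1 n → Cl n) : Prop :=
  (∀ A : Finset (Fin n), ContDiff ℝ (⊤ : ℕ∞) (fun y => u y A)) ∧ ∀ x, Dirac u x = 0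

/-- Membership in the generalized Bargmann–Fock space `F^2_φ(ℝ^{n+1}, A_n)`. -/
def MemFock {n : ℕ} (φ : Rn1 n → ℝ) (u : Rn1 n → Cl n) : Prop :=
  Monogenic u ∧ Integrable (fun x => cnormSq (u x) * Real.exp (-2 * φ x))

/-- Weighted `L^2` norm squared. -/
def fockNormSq {n : ℕ} (φ : Rn1 n → ℝ) (u : Rn1 n → Cl n) : ℝ :=
  ∫ x, cnormSq (u x) * Real.exp (-2 * φ x)

/-- `B` is the reproducing (Bergman) kernel of `F^2_φ(ℝ^{n+1}, A_n)`. -/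
def IsBergmanKernel {n : ℕ} (φ : Rn1 n → ℝ) (B : Rn1 n → Rn1 n → Cl n) : Prop :=
  (∀ x, MemFock φ (fun y => B y x)) ∧
  ∀ u, MemFock φ u → ∀ x,
    u x = ∫ y, Real.exp (-2 * φ y) • cmul (cconj (B y x)) (u y)

/-- Weak solution of `Du = f` on `Ω` (the Dirac operator taken distributionally). -/
def IsWeakSolution {n : ℕ} (Ω : Set (Rn1 n)) (u f : Rn1 n → Cl n) : Prop :=
  ∀ α : Rn1 n → ℝ, ContDiff ℝ (⊤ : ℕ∞) α → HasCompactSupport α → tsupport α ⊆ Ω →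
    ∫ x in Ω, α x • f x = - ∫ x in Ω, cmul (Dirac (fun y => scal (α y)) x) (u x)

section aux
variable {n : ℕ}

lemma csign_empty_right (A : Finset (Fin n)) : csign A ∅ = 1 := by
  simp [csign]

lemma csign_singleton (E : Finset (Fin n)) (k : Fin n) :
    csign E {k} = (-1 : ℝ) ^ (E.filter (fun a => k < a)).card * (if k ∈ E then -1 else 1) := by
  unfold csign
  have h1 : ((E ×ˢ ({k} : Finset (Fin n))).filter (fun p => p.2 < p.1)).card
      = (E.filter (fun a => k < a)).card := by
    rw [Finset.product_singleton, Finset.filter_map]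
    rw [Finset.card_map]
    congr 1
  have h2 : (E ∩ {k}).card = if k ∈ E then 1 else 0 := by
    by_cases h : k ∈ E <;> simp [Finset.inter_singleton_of_mem, Finset.inter_singleton_of_notMem, h]
  rw [h1, h2, pow_add]
  by_cases h : k ∈ E <;> simp [h]

lemma filter_symmDiff_singleton_same (E : Finset (Fin n)) (k : Fin n) :
    (symmDiff E {k}).filter (fun a => k < a) = E.filter (fun a => k < a) := by
  ext a
  simp only [Finset.mem_filter, Finset.mem_symmDiff, Finset.mem_singleton]
  constructor
  · rintro ⟨h, hk⟩
    refine ⟨?_, hk⟩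
    rcases h with ⟨h1, _⟩ | ⟨h1, _⟩
    · exact h1
    · exact absurd hk (by simp [h1])
  · rintro ⟨h, hk⟩
    exact ⟨Or.inl ⟨h, fun hak => by simp [hak] at hk⟩, hk⟩

lemma csign_symmDiff_same (E : Finset (Fin n)) (k : Fin n) :
    csign (symmDiff E {k}) {k} = - csign E {k} := by
  rw [csign_singleton, csign_singleton, filter_symmDiff_singleton_same]
  have : k ∈ symmDiff E {k} ↔ ¬ k ∈ E := by simp [Finset.mem_symmDiff]
  by_cases h : k ∈ E <;> simp [h, this]

lemma filter_symmDiff_singleton_other (E : Finset (Fin n)) (j k : Fin n) :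
    (symmDiff E {j}).filter (fun a => k < a)
      = if k < j then symmDiff (E.filter (fun a => k < a)) {j} else E.filter (fun a => k < a) := by
  split_ifs with hkj
  · ext a
    simp only [Finset.mem_filter, Finset.mem_symmDiff, Finset.mem_singleton]
    constructor
    · rintro ⟨h, hk⟩
      rcases h with ⟨h1, h2⟩ | ⟨h1, h2⟩
      · exact Or.inl ⟨⟨h1, hk⟩, h2⟩
      · exact Or.inr ⟨h1, fun hh => h2 hh.1⟩
    · rintro (⟨⟨h1, hk⟩, h2⟩ | ⟨h1, h2⟩)
      · exact ⟨Or.inl ⟨h1, h2⟩, hk⟩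
      · subst h1
        exact ⟨Or.inr ⟨rfl, fun hh => h2 ⟨hh, hkj⟩⟩, hkj⟩
  · ext a
    simp only [Finset.mem_filter, Finset.mem_symmDiff, Finset.mem_singleton]
    constructor
    · rintro ⟨h, hk⟩
      rcases h with ⟨h1, _⟩ | ⟨h1, _⟩
      · exact ⟨h1, hk⟩
      · subst h1; exact absurd hk hkj
    · rintro ⟨h, hk⟩
      refine ⟨Or.inl ⟨h, fun hh => ?_⟩, hk⟩
      subst hh; exact hkj hk

lemma neg_one_pow_card_symmDiff_singleton (X : Finset (Fin n)) (j : Fin n) :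
    (-1 : ℝ) ^ (symmDiff X {j}).card = -(-1 : ℝ) ^ X.card := by
  by_cases h : j ∈ X
  · have : symmDiff X {j} = X.erase j := by
      ext a; simp only [Finset.mem_symmDiff, Finset.mem_singleton, Finset.mem_erase]
      constructor
      · rintro (⟨h1, h2⟩ | ⟨h1, h2⟩)
        · exact ⟨h2, h1⟩
        · exact absurd (h1 ▸ h) h2
      · rintro ⟨h1, h2⟩; exact Or.inl ⟨h2, h1⟩
    rw [this, Finset.card_erase_of_mem h]
    have hX : X.card = (X.card - 1) + 1 := (Nat.succ_pred_eq_of_pos (Finset.card_pos.2 ⟨j, h⟩)).symm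
    conv_rhs => rw [hX]
    rw [pow_succ]; ring
  · have : symmDiff X {j} = insert j X := by
      ext a; simp only [Finset.mem_symmDiff, Finset.mem_singleton, Finset.mem_insert]
      constructor
      · rintro (⟨h1, _⟩ | ⟨h1, _⟩)
        · exact Or.inr h1
        · exact Or.inl h1
      · rintro (h1 | h1)
        · exact Or.inr ⟨h1, fun hh => h (h1 ▸ hh)⟩
        · exact Or.inl ⟨h1, fun hh => h (hh ▸ h1)⟩
    rw [this, Finset.card_insert_of_notMem h, pow_succ]; ring

lemma csign_symmDiff_other (E : Finset (Fin n)) (j k : Fin n) (hjk : j ≠ k) :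
    csign (symmDiff E {j}) {k} = (if k < j then -1 else 1) * csign E {k} := by
  rw [csign_singleton, csign_singleton, filter_symmDiff_singleton_other]
  have hmem : k ∈ symmDiff E {j} ↔ k ∈ E := by
    simp only [Finset.mem_symmDiff, Finset.mem_singleton]
    constructor
    · rintro (⟨h1, _⟩ | ⟨h1, _⟩)
      · exact h1
      · exact absurd h1.symm hjk
    · intro h1; exact Or.inl ⟨h1, fun hh => hjk hh.symm⟩
  rw [if_congr hmem rfl rfl]
  split_ifs with hkj h
  · rw [neg_one_pow_card_symmDiff_singleton]; ring
  · rw [neg_one_pow_card_symmDiff_singleton]; ring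
  · ring
  · ring


lemma csign_sq (A B : Finset (Fin n)) : csign A B ^ 2 = 1 := by
  unfold csign
  rw [← pow_mul, mul_comm, pow_mul]
  norm_num

lemma cmul_apply (x y : Cl n) (C : Finset (Fin n)) :
    cmul x y C = ∑ B : Finset (Fin n), csign (symmDiff C B) B * x (symmDiff C B) * y B := by
  unfold cmul
  rw [Finset.sum_comm]
  refine Finset.sum_congr rfl fun B _ => ?_
  rw [Finset.sum_eq_single (symmDiff C B)]
  · rw [if_pos (symmDiff_symmDiff_cancel_right B C)]
  · intro A _ hA
    rw [if_neg]
    intro h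
    exact hA (by rw [← h, symmDiff_symmDiff_cancel_right])
  · simp

lemma symmDiff_empty' (C : Finset (Fin n)) : symmDiff C (∅ : Finset (Fin n)) = C := by
  simpa using symmDiff_bot C

lemma sign_key (B B' : Finset (Fin n)) (hne : B ≠ B') (hB : B.card ≤ 1) (hB' : B'.card ≤ 1)
    (C : Finset (Fin n)) :
    csign (symmDiff C B') B * csign (symmDiff C B) B'
      = -(csign (symmDiff C B) B * csign (symmDiff C B') B') := by
  have hcase : ∀ X : Finset (Fin n), X.card ≤ 1 → X = ∅ ∨ ∃ j, X = {j} := by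
    intro X hX
    interval_cases h : X.card
    · exact Or.inl (Finset.card_eq_zero.mp h)
    · exact Or.inr (Finset.card_eq_one.mp h)
  rcases hcase B hB with rfl | ⟨j, rfl⟩ <;> rcases hcase B' hB' with rfl | ⟨k, rfl⟩
  · exact absurd rfl hne
  · rw [csign_empty_right, csign_empty_right, csign_symmDiff_same, symmDiff_empty']
    ring
  · rw [csign_empty_right, csign_empty_right, csign_symmDiff_same, symmDiff_empty']
    ring
  · have hjk : j ≠ k := fun h => hne (by rw [h])
    rw [csign_symmDiff_same, csign_symmDiff_same,
      csign_symmDiff_other C k j hjk.symm, csign_symmDiff_other C j k hjk]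
    rcases lt_trichotomy j k with h | h | h
    · rw [if_pos h, if_neg (asymm h)]; ring
    · exact absurd h hjk
    · rw [if_neg (asymm h), if_pos h]; ring

lemma offdiag (lam u : Cl n) (hu : ∀ A : Finset (Fin n), 2 ≤ A.card → u A = 0)
    (B B' : Finset (Fin n)) (hne : B ≠ B') :
    ∑ C : Finset (Fin n), (csign (symmDiff C B) B * lam (symmDiff C B) * u B) *
      (csign (symmDiff C B') B' * lam (symmDiff C B') * u B') = 0 := by
  by_cases hB : 2 ≤ B.card
  · simp [hu B hB]
  by_cases hB' : 2 ≤ B'.card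
  · simp [hu B' hB']
  push_neg at hB hB'
  set g : Finset (Fin n) → ℝ := fun C =>
    (csign (symmDiff C B) B * lam (symmDiff C B) * u B) *
      (csign (symmDiff C B') B' * lam (symmDiff C B') * u B') with hg
  have hinv : Function.Involutive (fun C : Finset (Fin n) => symmDiff C (symmDiff B B')) :=
    fun C => symmDiff_symmDiff_cancel_right (symmDiff B B') C
  have hkey : ∀ C, g (symmDiff C (symmDiff B B')) = - g C := by
    intro C
    have e1 : symmDiff (symmDiff C (symmDiff B B')) B = symmDiff C B' := by
      rw [symmDiff_assoc, symmDiff_comm B B', symmDiff_symmDiff_cancel_right]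
    have e2 : symmDiff (symmDiff C (symmDiff B B')) B' = symmDiff C B := by
      rw [symmDiff_assoc, symmDiff_symmDiff_cancel_right]
    simp only [hg, e1, e2]
    have := sign_key B B' hne (by omega) (by omega) C
    linear_combination (lam (symmDiff C B) * lam (symmDiff C B') * u B * u B') * this
  have hsum : ∑ C : Finset (Fin n), g C
      = ∑ C : Finset (Fin n), g (symmDiff C (symmDiff B B')) :=
    (Fintype.sum_bijective _ hinv.bijective
      (fun C => g (symmDiff C (symmDiff B B'))) g (fun C => rfl)).symm
  have : ∑ C : Finset (Fin n), g C = - ∑ C : Finset (Fin n), g C := by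
    conv_lhs => rw [hsum]
    rw [← Finset.sum_neg_distrib]
    exact Finset.sum_congr rfl fun C _ => hkey C
  linarith

lemma diag (lam u : Cl n) (B : Finset (Fin n)) :
    ∑ C : Finset (Fin n), (csign (symmDiff C B) B * lam (symmDiff C B) * u B) *
      (csign (symmDiff C B) B * lam (symmDiff C B) * u B)
      = (∑ D : Finset (Fin n), lam D ^ 2) * u B ^ 2 := by
  have hinv : Function.Involutive (fun C : Finset (Fin n) => symmDiff C B) :=
    fun C => symmDiff_symmDiff_cancel_right B C
  have h1 : ∀ C, (csign (symmDiff C B) B * lam (symmDiff C B) * u B) *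
      (csign (symmDiff C B) B * lam (symmDiff C B) * u B)
      = lam (symmDiff C B) ^ 2 * u B ^ 2 := by
    intro C
    have := csign_sq (symmDiff C B) B
    linear_combination (lam (symmDiff C B) ^ 2 * u B ^ 2) * this
  rw [Finset.sum_congr rfl fun C _ => h1 C, ← Finset.sum_mul]
  congr 1
  exact (Fintype.sum_bijective _ hinv.bijective _ _ (fun C => rfl))

theorem stmt3' (lam u : Cl n) (hu : ∀ A : Finset (Fin n), 2 ≤ A.card → u A = 0) :
    (∑ C : Finset (Fin n), (cmul lam u C) ^ 2)
      = (∑ D : Finset (Fin n), lam D ^ 2) * (∑ B : Finset (Fin n), u B ^ 2) := by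
  have step1 : ∀ C : Finset (Fin n), (cmul lam u C) ^ 2
      = ∑ B : Finset (Fin n), ∑ B' : Finset (Fin n),
        (csign (symmDiff C B) B * lam (symmDiff C B) * u B) *
        (csign (symmDiff C B') B' * lam (symmDiff C B') * u B') := by
    intro C
    rw [cmul_apply, sq, Finset.sum_mul_sum]
  calc (∑ C : Finset (Fin n), (cmul lam u C) ^ 2)
      = ∑ B : Finset (Fin n), ∑ B' : Finset (Fin n), ∑ C : Finset (Fin n),
        (csign (symmDiff C B) B * lam (symmDiff C B) * u B) *
        (csign (symmDiff C B') B' * lam (symmDiff C B') * u B') := by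
        rw [Finset.sum_congr rfl fun C _ => step1 C, Finset.sum_comm]
        exact Finset.sum_congr rfl fun B _ => Finset.sum_comm
    _ = ∑ B : Finset (Fin n), (∑ D : Finset (Fin n), lam D ^ 2) * u B ^ 2 := by
        refine Finset.sum_congr rfl fun B _ => ?_
        rw [Finset.sum_eq_single B]
        · exact diag lam u B
        · intro B' _ hB'
          exact offdiag lam u hu B B' (Ne.symm hB')
        · simp
    _ = (∑ D : Finset (Fin n), lam D ^ 2) * (∑ B : Finset (Fin n), u B ^ 2) := by
        rw [Finset.mul_sum]


end aux

/-- For any `λ ∈ A_n` and any vector-valued `u`, `|λ u|^2 = |λ|^2 |u|^2`. -/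
theorem stmt3 (n : ℕ) (lam u : Cl n) (hu : IsVector u) :
    cnormSq (cmul lam u) = cnormSq lam * cnormSq u := by
  unfold cnormSq
  exact stmt3' lam u hu

end
end

section
/- Weighted integration by parts identity for the adjoint Dirac operator: for φ ∈ C^2(Ω, ℝ), α_A ∈ C_0^∞(Ω, ℝ), and u ∈ C^1(Ω, A_n), one has ∫_Ω α_A(x) Du(x) e^{-2φ(x)} dx = ∫_Ω conj(D*_φ α_A)(x) u(x) e^{-2φ(x)} dx, where D*_φ α_A = 2 α_A conj(D)φ − conj(D)α_A. -/
open MeasureTheory Finset Real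

noncomputable section

section Lemmas
variable {n : ℕ}

lemma cmul_add_left (x y z : Cl n) : cmul (x + y) z = cmul x z + cmul y z := by
  funext C
  simp only [cmul, Pi.add_apply, ← Finset.sum_add_distrib]
  refine Finset.sum_congr rfl fun A _ => Finset.sum_congr rfl fun B _ => ?_
  split <;> ring

lemma cmul_smul_left (r : ℝ) (x z : Cl n) : cmul (r • x) z = r • cmul x z := by
  funext C
  simp only [cmul, Pi.smul_apply, smul_eq_mul, Finset.mul_sum]
  refine Finset.sum_congr rfl fun A _ => ?_
  refine Finset.sum_congr rfl fun B _ => ?_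
  split <;> ring

lemma cmul_add_right (x y z : Cl n) : cmul x (y + z) = cmul x y + cmul x z := by
  funext C
  simp only [cmul, Pi.add_apply, ← Finset.sum_add_distrib]
  refine Finset.sum_congr rfl fun A _ => Finset.sum_congr rfl fun B _ => ?_
  split <;> ring

lemma cmul_smul_right (r : ℝ) (x z : Cl n) : cmul x (r • z) = r • cmul x z := by
  funext C
  simp only [cmul, Pi.smul_apply, smul_eq_mul, Finset.mul_sum]
  refine Finset.sum_congr rfl fun A _ => ?_
  refine Finset.sum_congr rfl fun B _ => ?_
  split <;> ring

/-- Clifford left multiplication as a continuous linear map in the right argument. -/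
def cmulL (e : Cl n) : Cl n →L[ℝ] Cl n :=
  LinearMap.toContinuousLinearMap
    { toFun := fun v => cmul e v
      map_add' := fun y z => cmul_add_right e y z
      map_smul' := fun r z => cmul_smul_right r e z }

@[simp] lemma cmulL_apply (e v : Cl n) : cmulL e v = cmul e v := rfl

/-- Clifford right multiplication as a linear map in the left argument. -/
def cmulLl (z : Cl n) : Cl n →ₗ[ℝ] Cl n :=
  { toFun := fun x => cmul x z
    map_add' := fun x y => cmul_add_left x y z
    map_smul' := fun r x => cmul_smul_left r x z }

lemma cmul_sum_left {ι : Type*} (s : Finset ι) (f : ι → Cl n) (z : Cl n) :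
    cmul (∑ i ∈ s, f i) z = ∑ i ∈ s, cmul (f i) z :=
  map_sum (cmulLl z) f s

lemma cmul_sub_left (x y z : Cl n) : cmul (x - y) z = cmul x z - cmul y z :=
  map_sub (cmulLl z) x y

lemma cmul_scal (x : Cl n) (r : ℝ) : cmul x (scal r) = r • x := by
  funext C
  simp only [cmul, scal, Pi.smul_apply, smul_eq_mul]
  have h1 : ∀ A : Finset (Fin n),
      (∑ B : Finset (Fin n), if symmDiff A B = C then csign A B * x A * (if B = ∅ then r else 0) else 0)
        = if A = C then r * x A else 0 := by
    intro A
    have : ∀ B : Finset (Fin n),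
        (if symmDiff A B = C then csign A B * x A * (if B = ∅ then r else 0) else 0)
          = if B = ∅ then (if A = C then r * x A else 0) else 0 := by
      intro B
      by_cases hB : B = ∅
      · subst hB
        have hs : symmDiff A (∅ : Finset (Fin n)) = A := by
          simp [symmDiff_eq_sup_sdiff_inf]
        have hc : csign A (∅ : Finset (Fin n)) = 1 := by
          simp [csign]
        rw [hs]
        split <;> simp [hc] <;> ring
      · simp [hB]
    rw [Finset.sum_congr rfl fun B _ => this B, Finset.sum_ite_eq' Finset.univ (∅ : Finset (Fin n))]
    simp
  rw [Finset.sum_congr rfl fun A _ => h1 A, Finset.sum_ite_eq' Finset.univ C]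
  simp [mul_comm]

lemma cconj_cconj (x : Cl n) : cconj (cconj x) = x := by
  funext A
  simp only [cconj, ← mul_assoc, ← pow_add]
  rw [Even.neg_one_pow ⟨_, rfl⟩, one_mul]

lemma cconj_smul (r : ℝ) (x : Cl n) : cconj (r • x) = r • cconj x := by
  funext A; simp only [cconj, Pi.smul_apply, smul_eq_mul]; ring

lemma cconj_sub (x y : Cl n) : cconj (x - y) = cconj x - cconj y := by
  funext A; simp only [cconj, Pi.sub_apply]; ring

lemma cconj_sum {ι : Type*} (s : Finset ι) (f : ι → Cl n) :
    cconj (∑ i ∈ s, f i) = ∑ i ∈ s, cconj (f i) := by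
  funext A
  simp only [cconj, Finset.sum_apply, Finset.mul_sum]

end Lemmas

section Lemmas2
variable {n : ℕ}

lemma pder_const_zero (j : Fin (n + 1)) (x : Rn1 n) :
    pder j (fun _ => (0 : ℝ)) x = 0 := by
  simp [pder]

lemma diracConj_scal (f : Rn1 n → ℝ) (x : Rn1 n) :
    DiracConj (fun y => scal (f y)) x = ∑ j : Fin (n + 1), pder j f x • cconj (egen j) := by
  unfold DiracConj
  refine Finset.sum_congr rfl fun j _ => ?_
  show cmul (cconj (egen j)) (fun A => pder j (fun y => scal (f y) A) x) = _
  have h : (fun A => pder j (fun y => scal (f y) A) x) = (scal (pder j f x) : Cl n) := by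
    funext A
    by_cases hA : A = (∅ : Finset (Fin n))
    · subst hA; simp [scal]
    · simp [scal, hA, pder]
  rw [h, cmul_scal]

lemma cconj_dstar_eq (φ α : Rn1 n → ℝ) (x : Rn1 n) :
    cconj (Dstar φ α x) =
      ∑ j : Fin (n + 1), (2 * α x * pder j φ x - pder j α x) • egen j := by
  unfold Dstar
  rw [diracConj_scal, diracConj_scal, cconj_sub, cconj_smul, cconj_sum, cconj_sum]
  have h : ∀ (g : Rn1 n → ℝ), ∀ j : Fin (n+1), cconj (pder j g x • cconj (egen j)) = pder j g x • egen j := by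
    intro g j; rw [cconj_smul, cconj_cconj]
  simp only [h]
  rw [Finset.smul_sum, ← Finset.sum_sub_distrib]
  refine Finset.sum_congr rfl fun j _ => ?_
  rw [smul_smul, sub_smul]

lemma cmul_cconj_dstar (φ α : Rn1 n → ℝ) (x : Rn1 n) (v : Cl n) :
    cmul (cconj (Dstar φ α x)) v =
      ∑ j : Fin (n + 1), (2 * α x * pder j φ x - pder j α x) • cmul (egen j) v := by
  rw [cconj_dstar_eq, cmul_sum_left]
  exact Finset.sum_congr rfl fun j _ => cmul_smul_left _ _ _

end Lemmas2

/-- Weighted integration by parts for the adjoint Dirac operator: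
`∫_Ω α Du e^{-2φ} = ∫_Ω conj(D*_φ α) u e^{-2φ}` for real test functions `α`. -/
theorem stmt7 (n : ℕ) (Ω : Set (Rn1 n)) (hΩ : IsOpen Ω)
    (φ : Rn1 n → ℝ) (hφ : ContDiff ℝ 2 φ)
    (α : Rn1 n → ℝ) (hα : ContDiff ℝ (⊤ : ℕ∞) α) (hαc : HasCompactSupport α)
    (hαΩ : tsupport α ⊆ Ω)
    (u : Rn1 n → Cl n) (hu : ∀ A : Finset (Fin n), ContDiffOn ℝ 1 (fun y => u y A) Ω) :
    ∫ x in Ω, (α x * Real.exp (-2 * φ x)) • Dirac u x =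
      ∫ x in Ω, Real.exp (-2 * φ x) • cmul (cconj (Dstar φ α x)) (u x) := by
  classical
  set β : Rn1 n → ℝ := fun y => α y * Real.exp (-2 * φ y) with hβdef
  have hφ1 : ContDiff ℝ 1 φ := hφ.of_le one_le_two
  have hβ : ContDiff ℝ 1 β :=
    (hα.of_le (by simp)).mul ((Real.contDiff_exp.of_le le_top).comp (contDiff_const.mul hφ1))
  have hβc : HasCompactSupport β := hαc.mul_right
  have hβΩ : tsupport β ⊆ Ω := le_trans tsupport_mul_subset_left hαΩ
  -- differentiability of u on Ω
  have huA : ∀ (A : Finset (Fin n)) x, x ∈ Ω → DifferentiableAt ℝ (fun y => u y A) x :=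
    fun A x hx => ((hu A).contDiffAt (hΩ.mem_nhds hx)).differentiableAt one_ne_zero
  have huD : ∀ x ∈ Ω, DifferentiableAt ℝ u x :=
    fun x hx => differentiableAt_pi.mpr (fun A => huA A x hx)
  have hfderiv_u : ∀ x ∈ Ω, ∀ j : Fin (n+1),
      (fun A => pder j (fun y => u y A) x) = fderiv ℝ u x (EuclideanSpace.single j 1) := by
    intro x hx j
    rw [fderiv_pi (fun A => huA A x hx)]
    rfl
  -- derivative of β
  have hβj : ∀ (j : Fin (n+1)) x, fderiv ℝ β x (EuclideanSpace.single j 1) =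
      pder j α x * Real.exp (-2 * φ x)
        + α x * (Real.exp (-2 * φ x) * (-2 * pder j φ x)) := by
    intro j x
    have hαx := (hα.differentiable (by simp) x).hasFDerivAt
    have hφx := (hφ1.differentiable one_ne_zero x).hasFDerivAt
    have h1 : HasFDerivAt (fun y => -2 * φ y) ((-2 : ℝ) • fderiv ℝ φ x) x := hφx.const_mul (-2)
    have h2 := h1.exp
    have h3 : HasFDerivAt (fun y => α y * Real.exp (-2 * φ y)) _ x := hαx.mul h2
    rw [hβdef, h3.fderiv]
    simp only [ContinuousLinearMap.add_apply, ContinuousLinearMap.smul_apply, smul_eq_mul, pder]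
    ring
  -- the auxiliary compactly supported C^1 functions
  set g : Fin (n+1) → Rn1 n → Cl n := fun j y => β y • cmul (egen j) (u y) with hgdef
  have hg0 : ∀ j : Fin (n+1), ∀ x, x ∉ tsupport β → g j =ᶠ[nhds x] 0 := by
    intro j x hx
    filter_upwards [notMem_tsupport_iff_eventuallyEq.mp hx] with y hy
    have : β y = 0 := hy
    simp [hgdef, this]
  have hgC1 : ∀ j : Fin (n+1), ContDiff ℝ 1 (g j) := by
    intro j
    rw [contDiff_iff_contDiffAt]
    intro x
    by_cases hx : x ∈ Ω
    · have huΩ : ContDiffOn ℝ 1 u Ω := contDiffOn_pi.mpr hu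
      have hgΩ : ContDiffOn ℝ 1 (g j) Ω :=
        (hβ.contDiffOn).smul (((cmulL (egen j)).contDiff).comp_contDiffOn huΩ)
      exact hgΩ.contDiffAt (hΩ.mem_nhds hx)
    · exact (contDiffAt_const (c := (0 : Cl n))).congr_of_eventuallyEq
        (hg0 j x (fun h => hx (hβΩ h)))
  have hgc : ∀ j : Fin (n+1), HasCompactSupport (g j) := by
    intro j
    refine hβc.mono ?_
    intro y hy
    simp only [Function.mem_support] at hy ⊢
    intro h0
    exact hy (by simp [hgdef, h0])
  -- integrability of the derivative terms
  have hH_cont : ∀ j : Fin (n+1),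
      Continuous (fun x => fderiv ℝ (g j) x (EuclideanSpace.single j 1)) := fun j =>
    (ContinuousLinearMap.apply ℝ (Cl n) (EuclideanSpace.single j (1:ℝ))).continuous.comp
      ((hgC1 j).continuous_fderiv one_ne_zero)
  have hH_supp : ∀ j : Fin (n+1),
      HasCompactSupport (fun x => fderiv ℝ (g j) x (EuclideanSpace.single j 1)) := by
    intro j
    refine HasCompactSupport.mono (HasCompactSupport.fderiv (𝕜 := ℝ) (hgc j)) ?_
    intro y hy
    simp only [Function.mem_support] at hy ⊢
    intro h0
    exact hy (by rw [h0]; rfl)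
  have hH_int : ∀ j : Fin (n+1),
      Integrable (fun x => fderiv ℝ (g j) x (EuclideanSpace.single j 1)) := fun j =>
    (hH_cont j).integrable_of_hasCompactSupport (hH_supp j)
  -- the key vanishing integral
  have hkey : ∀ j : Fin (n+1),
      ∫ x, fderiv ℝ (g j) x (EuclideanSpace.single j 1) = 0 := by
    intro j
    have h1 : Differentiable ℝ (fun _ : Rn1 n => (1:ℝ)) := differentiable_const 1
    have hg' : Differentiable ℝ (g j) := (hgC1 j).differentiable one_ne_zero
    have hz : (fun x : Rn1 n =>
        fderiv ℝ (fun _ : Rn1 n => (1:ℝ)) x (EuclideanSpace.single j 1) • g j x)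
        = fun _ => (0 : Cl n) := by
      funext x; simp [fderiv_const]
    have hint1 : Integrable (fun x : Rn1 n =>
        fderiv ℝ (fun _ : Rn1 n => (1:ℝ)) x (EuclideanSpace.single j 1) • g j x) := by
      rw [hz]; exact integrable_zero _ _ _
    have hint2 : Integrable (fun x : Rn1 n =>
        (1:ℝ) • fderiv ℝ (g j) x (EuclideanSpace.single j 1)) := by
      simpa [one_smul] using hH_int j
    have hint3 : Integrable (fun x : Rn1 n => (1:ℝ) • g j x) := by
      simpa [one_smul] using
        ((hgC1 j).continuous.integrable_of_hasCompactSupport (hgc j))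
    have := integral_smul_fderiv_eq_neg_fderiv_smul_of_integrable
      (f := fun _ : Rn1 n => (1:ℝ)) (g := g j) (v := EuclideanSpace.single j 1)
      hint1 hint2 hint3 (fun x _ => h1 x) (fun x _ => hg' x)
    rw [hz] at this
    simpa [one_smul] using this
  -- pointwise derivative formula for g j
  have hCj : ∀ (j : Fin (n+1)) x, fderiv ℝ (g j) x (EuclideanSpace.single j 1) =
      β x • cmul (egen j) (fderiv ℝ u x (EuclideanSpace.single j 1))
        + (fderiv ℝ β x (EuclideanSpace.single j 1)) • cmul (egen j) (u x) := by
    intro j x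
    by_cases hx : x ∈ Ω
    · have hwd : DifferentiableAt ℝ (fun y => cmulL (egen j) (u y)) x :=
        ((cmulL (egen j)).differentiableAt).comp x (huD x hx)
      have hfw : fderiv ℝ (fun y => cmulL (egen j) (u y)) x
          = (cmulL (egen j)).comp (fderiv ℝ u x) := by
        have := fderiv_comp x ((cmulL (egen j)).differentiableAt (x := u x)) (huD x hx)
        rw [(cmulL (egen j)).fderiv] at this
        exact this
      have hgf : g j = fun y => β y • cmulL (egen j) (u y) := rfl
      rw [hgf, fderiv_fun_smul (hβ.differentiable one_ne_zero x) hwd, hfw]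
      simp only [ContinuousLinearMap.add_apply, ContinuousLinearMap.smul_apply,
        ContinuousLinearMap.smulRight_apply, ContinuousLinearMap.coe_comp',
        Function.comp_apply, cmulL_apply]
    · have hx' : x ∉ tsupport β := fun h => hx (hβΩ h)
      have hb0 : β x = 0 := image_eq_zero_of_notMem_tsupport hx'
      have hβ'0 : fderiv ℝ β x = 0 := by
        by_contra h
        exact hx' (support_fderiv_subset ℝ (Function.mem_support.mpr h))
      have hz : fderiv ℝ (g j) x = 0 := by
        rw [(hg0 j x hx').fderiv_eq]
        exact fderiv_const_apply 0
      rw [hz, hb0, hβ'0]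
      simp
  -- pointwise identification of the left integrand on Ω
  have hA : ∀ x ∈ Ω, (α x * Real.exp (-2 * φ x)) • Dirac u x
      = ∑ j : Fin (n+1),
          β x • cmul (egen j) (fderiv ℝ u x (EuclideanSpace.single j 1)) := by
    intro x hx
    unfold Dirac
    rw [Finset.smul_sum]
    refine Finset.sum_congr rfl fun j _ => ?_
    rw [hfderiv_u x hx j]
  -- pointwise identification of the right integrand (everywhere)
  have hB : ∀ x, Real.exp (-2 * φ x) • cmul (cconj (Dstar φ α x)) (u x)
      = ∑ j : Fin (n+1),
          (-(fderiv ℝ β x (EuclideanSpace.single j 1))) • cmul (egen j) (u x) := by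
    intro x
    rw [cmul_cconj_dstar, Finset.smul_sum]
    refine Finset.sum_congr rfl fun j _ => ?_
    rw [smul_smul, hβj j x]
    congr 1
    ring
  -- the two global integrands
  set F : Rn1 n → Cl n := fun x => ∑ j : Fin (n+1),
      β x • cmul (egen j) (fderiv ℝ u x (EuclideanSpace.single j 1)) with hFdef
  set G : Rn1 n → Cl n := fun x => ∑ j : Fin (n+1),
      (-(fderiv ℝ β x (EuclideanSpace.single j 1))) • cmul (egen j) (u x) with hGdef
  -- continuity and integrability of G
  have hβ'cont : ∀ j : Fin (n+1),
      Continuous (fun x => fderiv ℝ β x (EuclideanSpace.single j 1)) := fun j =>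
    (ContinuousLinearMap.apply ℝ ℝ (EuclideanSpace.single j (1:ℝ))).continuous.comp
      (hβ.continuous_fderiv one_ne_zero)
  have hβ'0 : ∀ x, x ∉ tsupport β → fderiv ℝ β x = 0 := by
    intro x hx
    by_contra h
    exact hx (support_fderiv_subset ℝ (Function.mem_support.mpr h))
  have hG_cont : Continuous G := by
    rw [continuous_iff_continuousAt]
    intro x
    by_cases hx : x ∈ Ω
    · have hu_cont : ContinuousOn u Ω := by
        apply continuousOn_pi.mpr
        exact fun A => (hu A).continuousOn
      have hGΩ : ContinuousOn G Ω := by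
        rw [hGdef]
        refine continuousOn_finset_sum _ fun j _ => ?_
        exact (((hβ'cont j).neg).continuousOn).smul
          (((cmulL (egen j)).continuous.comp_continuousOn hu_cont))
      exact hGΩ.continuousAt (hΩ.mem_nhds hx)
    · have hx' : x ∉ tsupport β := fun h => hx (hβΩ h)
      have h0 : G =ᶠ[nhds x] 0 := by
        filter_upwards [(isClosed_tsupport β).isOpen_compl.mem_nhds hx'] with y hy
        have : fderiv ℝ β y = 0 := hβ'0 y hy
        simp [hGdef, this]
      exact continuousAt_const.congr h0.symm
  have hG_supp : HasCompactSupport G := by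
    refine hβc.mono' ?_
    intro y hy
    simp only [Function.mem_support] at hy
    by_contra h
    exact hy (by simp [hGdef, hβ'0 y h])
  have hG_int : Integrable G := hG_cont.integrable_of_hasCompactSupport hG_supp
  -- assemble
  have hFzero : ∀ x, x ∉ Ω → F x = 0 := by
    intro x hx
    have hb0 : β x = 0 := image_eq_zero_of_notMem_tsupport (fun h => hx (hβΩ h))
    simp [hFdef, hb0]
  have hGzero : ∀ x, x ∉ Ω → G x = 0 := by
    intro x hx
    have : fderiv ℝ β x = 0 := hβ'0 x (fun h => hx (hβΩ h))
    simp [hGdef, this]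
  have hFG : F = fun x => G x +
      ∑ j : Fin (n+1), fderiv ℝ (g j) x (EuclideanSpace.single j 1) := by
    funext x
    rw [hFdef, hGdef]
    simp only [hCj]
    rw [← Finset.sum_add_distrib]
    refine Finset.sum_congr rfl fun j _ => ?_
    rw [neg_smul]
    abel
  calc ∫ x in Ω, (α x * Real.exp (-2 * φ x)) • Dirac u x
      = ∫ x in Ω, F x := setIntegral_congr_fun hΩ.measurableSet (fun x hx => hA x hx)
    _ = ∫ x, F x := setIntegral_eq_integral_of_forall_compl_eq_zero hFzero
    _ = ∫ x, (G x + ∑ j : Fin (n+1), fderiv ℝ (g j) x (EuclideanSpace.single j 1)) := by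
        rw [hFG]
    _ = (∫ x, G x) + ∫ x, ∑ j : Fin (n+1), fderiv ℝ (g j) x (EuclideanSpace.single j 1) :=
        integral_add hG_int (integrable_finset_sum _ (fun j _ => hH_int j))
    _ = ∫ x, G x := by
        rw [integral_finset_sum _ (fun j _ => hH_int j)]
        simp [hkey]
    _ = ∫ x in Ω, G x := (setIntegral_eq_integral_of_forall_compl_eq_zero hGzero).symm
    _ = ∫ x in Ω, Real.exp (-2 * φ x) • cmul (cconj (Dstar φ α x)) (u x) :=
        setIntegral_congr_fun hΩ.measurableSet (fun x _ => (hB x).symm)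

end
end
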